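/- Let (Ω, 𝔉, μ) be a probability space, (E_m)_{m≥1} an i.i.d. sequence of exponential random variables with rate 1, and W = (2/π²) Σ_{m=1}^∞ E_m/(2m−1)². Then for every c ∈ ℝ, cosh(c/2) · E[exp(−c²W/2)] = 1. Equivalently, the exponentially tilted measure with density w ↦ cosh(c/2)·e^{−c²w/2} with respect to the law of W (i.e. the PG(1,c) distribution) is a probability measure. -/

import Mathlib

/-!
Splitting Euler's sine product at `2z` into its odd and even factors gives the cosine product
`cos (π z) = ∏ₖ (1 - 4z² / (2k+1)²)`, hence `cosh (c/2) = ∏ₖ (1 + c² / (π² (2k+1)²))`.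
On the other side, `E[exp (-s Eₘ)] = 1 / (1 + s)`, so by independence the Laplace transform of
a partial sum of `W` is the reciprocal of a partial product. As `W ≥ 0` is an a.s. convergent
series (its terms have summable means), dominated convergence makes `E[exp (-c² W / 2)]` the
limit of these, i.e. `1 / cosh (c/2)`.
-/

open MeasureTheory ProbabilityTheory Real Filter Finset Topology

lemma Finset.prod_range_two_mul {M : Type*} [CommMonoid M] (f : ℕ → M) (n : ℕ) :
    ∏ j ∈ range (2 * n), f j = (∏ k ∈ range n, f (2 * k)) * ∏ k ∈ range n, f (2 * k + 1) := by
  induction n with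
  | zero => simp
  | succ n ih =>
    rw [show 2 * (n + 1) = 2 * n + 1 + 1 by ring, prod_range_succ, prod_range_succ, ih,
      prod_range_succ, prod_range_succ]
    ac_rfl

theorem Complex.tendsto_euler_cos_prod {z : ℂ} (hz : Complex.sin (π * z) ≠ 0) :
    Tendsto (fun n : ℕ => ∏ k ∈ range n, (1 - 4 * z ^ 2 / (2 * k + 1) ^ 2)) atTop
      (𝓝 (Complex.cos (π * z))) := by
  set P : ℂ → ℕ → ℂ := fun w n => π * w * ∏ j ∈ range n, (1 - w ^ 2 / (j + 1) ^ 2)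
  have hP (w : ℂ) : Tendsto (P w) atTop (𝓝 (Complex.sin (π * w))) :=
    Complex.tendsto_euler_sin_prod w
  have hdouble : Tendsto (fun n => P (2 * z) (2 * n)) atTop (𝓝 (Complex.sin (π * (2 * z)))) :=
    (hP (2 * z)).comp (tendsto_id.const_mul_atTop' two_pos)
  have hsplit (n : ℕ) : P (2 * z) (2 * n)
      = 2 * P z n * ∏ k ∈ range n, (1 - 4 * z ^ 2 / (2 * k + 1) ^ 2) := by
    simp only [P, prod_range_two_mul]
    have hhalf (k : ℕ) : (1 : ℂ) - (2 * z) ^ 2 / ((2 * k + 1 : ℕ) + 1) ^ 2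
        = 1 - z ^ 2 / (k + 1) ^ 2 := by
      push_cast
      rw [show (2 * (k : ℂ) + 1 + 1) = 2 * (k + 1) by ring, mul_pow, mul_pow,
        mul_div_mul_left _ _ (by norm_num : (2 : ℂ) ^ 2 ≠ 0)]
    rw [prod_congr rfl fun k _ => hhalf k]
    push_cast
    simp only [mul_pow, show (2 : ℂ) ^ 2 = 4 by norm_num]
    ring
  have hlim := hdouble.div ((hP z).const_mul 2) (mul_ne_zero two_ne_zero hz)
  rw [show π * (2 * z) = 2 * (π * z) by ring, Complex.sin_two_mul,
    mul_div_cancel_left₀ _ (mul_ne_zero two_ne_zero hz)] at hlim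
  refine hlim.congr' ?_
  filter_upwards [(hP z).eventually_ne hz] with n hn
  simp only [Pi.div_apply, hsplit, mul_div_cancel_left₀ _ (mul_ne_zero two_ne_zero hn)]

theorem Real.tendsto_euler_cosh_prod (x : ℝ) :
    Tendsto (fun n : ℕ => ∏ k ∈ range n, (1 + 4 * x ^ 2 / (2 * k + 1) ^ 2)) atTop
      (𝓝 (cosh (π * x))) := by
  rcases eq_or_ne x 0 with rfl | hx
  · simp
  have hsin : Complex.sin (π * (x * Complex.I)) = Real.sinh (π * x) * Complex.I := by
    rw [← mul_assoc, ← Complex.ofReal_mul, Complex.sin_mul_I, Complex.ofReal_sinh]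
  have hcos : Complex.cos (π * (x * Complex.I)) = Real.cosh (π * x) := by
    rw [← mul_assoc, ← Complex.ofReal_mul, Complex.cos_mul_I, Complex.ofReal_cosh]
  have h := Complex.tendsto_euler_cos_prod (z := x * Complex.I) (by
    rw [hsin]
    exact mul_ne_zero (by exact_mod_cast sinh_ne_zero.2 (mul_ne_zero pi_ne_zero hx))
      Complex.I_ne_zero)
  rw [hcos] at h
  rw [← tendsto_ofReal_iff]
  convert h using 2 with n
  push_cast
  refine prod_congr rfl fun k _ => ?_
  rw [mul_pow, Complex.I_sq]
  ring

namespace ProbabilityTheory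

lemma expMeasure_eq_withDensity (r : ℝ) :
    expMeasure r = volume.withDensity (exponentialPDF r) := rfl

lemma measurable_exponentialPDF (r : ℝ) : Measurable (exponentialPDF r) :=
  (measurable_exponentialPDFReal r).ennreal_ofReal

lemma exponentialPDF_mul_exp {r t : ℝ} (ht : t < r) (x : ℝ) :
    exponentialPDF r x * ENNReal.ofReal (exp (t * x))
      = ENNReal.ofReal (r / (r - t)) * exponentialPDF (r - t) x := by
  rcases lt_or_ge x 0 with hx | hx
  · simp [exponentialPDF_of_neg hx]
  have hrt : 0 < r - t := sub_pos.2 ht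
  rw [exponentialPDF_of_nonneg hx, exponentialPDF_of_nonneg hx,
    ← ENNReal.ofReal_mul' (exp_pos _).le, ← ENNReal.ofReal_mul' (by positivity)]
  congr 1
  rw [mul_assoc, ← exp_add, ← mul_assoc, div_mul_cancel₀ _ hrt.ne']
  ring_nf

lemma lintegral_exp_mul_expMeasure {r t : ℝ} (ht : t < r) :
    ∫⁻ x, ENNReal.ofReal (exp (t * x)) ∂expMeasure r = ENNReal.ofReal (r / (r - t)) := by
  rw [expMeasure_eq_withDensity, lintegral_withDensity_eq_lintegral_mul _
    (measurable_exponentialPDF r) (by fun_prop)]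
  simp only [Pi.mul_apply, exponentialPDF_mul_exp ht]
  rw [lintegral_const_mul _ (measurable_exponentialPDF _),
    lintegral_exponentialPDF_eq_one (sub_pos.2 ht), mul_one]

lemma integrable_exp_mul_expMeasure {r t : ℝ} (ht : t < r) :
    Integrable (fun x => exp (t * x)) (expMeasure r) := by
  refine ⟨by fun_prop, ?_⟩
  simp only [HasFiniteIntegral, Real.enorm_eq_ofReal (exp_pos _).le,
    lintegral_exp_mul_expMeasure ht, ENNReal.ofReal_lt_top]

lemma mgf_id_expMeasure {r t : ℝ} (hr : 0 ≤ r) (ht : t < r) :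
    mgf id (expMeasure r) t = r / (r - t) := by
  rw [mgf, integral_eq_lintegral_of_nonneg_ae (ae_of_all _ fun x => (exp_pos _).le)
    (by fun_prop)]
  simp only [id, lintegral_exp_mul_expMeasure ht]
  exact ENNReal.toReal_ofReal (div_nonneg hr (sub_pos.2 ht).le)

lemma ae_nonneg_expMeasure (r : ℝ) : ∀ᵐ x ∂expMeasure r, 0 ≤ x := by
  simp only [ae_iff, not_le]
  rw [Set.Iio_def, expMeasure_eq_withDensity, withDensity_apply _ measurableSet_Iio]
  exact lintegral_exponentialPDF_of_nonpos le_rfl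

lemma integrable_id_expMeasure {r : ℝ} (hr : 0 < r) : Integrable id (expMeasure r) :=
  integrable_of_mem_interior_integrableExpSet <| mem_interior_iff_mem_nhds.2 <|
    Filter.mem_of_superset (Iio_mem_nhds hr) fun _ ht => integrable_exp_mul_expMeasure ht

end ProbabilityTheory

theorem MeasureTheory.ae_summable_of_summable_integral_norm {α ι E : Type*} [MeasurableSpace α]
    {μ : Measure α} [Countable ι] [NormedAddCommGroup E] [CompleteSpace E] {f : ι → α → E}
    (hf : ∀ i, Integrable (f i) μ) (h : Summable fun i => ∫ a, ‖f i a‖ ∂μ) :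
    ∀ᵐ a ∂μ, Summable fun i => f i a := by
  have hnorm : ∑' i, eLpNorm (f i) 1 μ ≠ ⊤ := by
    simp_rw [eLpNorm_one_eq_lintegral_enorm, ← ofReal_integral_norm_eq_lintegral_enorm (hf _)]
    rw [← ENNReal.ofReal_tsum_of_nonneg (fun i => integral_nonneg fun _ => norm_nonneg _) h]
    exact ENNReal.ofReal_ne_top
  filter_upwards [summable_norm_of_tsum_eLpNorm_ne_top le_rfl
    (fun i => (hf i).aestronglyMeasurable) hnorm] with a ha using ha.of_norm

theorem ProbabilityTheory.iIndepFun.tendsto_prod_mgf {Ω : Type*} [MeasurableSpace Ω]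
    {μ : Measure Ω} {Y : ℕ → Ω → ℝ} (hindep : iIndepFun Y μ) (hmeas : ∀ m, AEMeasurable (Y m) μ)
    (hnonneg : ∀ m, 0 ≤ᵐ[μ] Y m) (hsum : ∀ᵐ ω ∂μ, Summable fun m => Y m ω) {t : ℝ} (ht : t ≤ 0) :
    Tendsto (fun n => ∏ m ∈ range n, mgf (Y m) μ t) atTop
      (𝓝 (mgf (fun ω => ∑' m, Y m ω) μ t)) := by
  have := hindep.isProbabilityMeasure
  simp_rw [← hindep.mgf_sum₀ hmeas, mgf, Finset.sum_apply]
  refine tendsto_integral_of_dominated_convergence (fun _ => 1) (fun _ => ?_)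
    (integrable_const 1) (fun _ => ?_) ?_
  · exact ((Finset.aemeasurable_fun_sum _ fun m _ => hmeas m).const_mul t).exp.aestronglyMeasurable
  · filter_upwards [ae_all_iff.2 hnonneg] with ω hω
    rw [norm_of_nonneg (exp_pos _).le, exp_le_one_iff]
    exact mul_nonpos_of_nonpos_of_nonneg ht (sum_nonneg fun m _ => hω m)
  · filter_upwards [hsum] with ω hω
    exact (continuous_exp.tendsto _).comp (hω.hasSum.tendsto_sum_nat.const_mul t)

section ExponentialSeries

variable {Ω : Type*} [MeasurableSpace Ω] {μ : Measure Ω} {E : ℕ → Ω → ℝ} {a : ℕ → ℝ} {r : ℝ}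

lemma ae_summable_mul_of_map_eq_expMeasure (hmeas : ∀ m, Measurable (E m))
    (hdist : ∀ m, μ.map (E m) = expMeasure r) (hr : 0 < r) (ha : Summable a) :
    ∀ᵐ ω ∂μ, Summable fun m => a m * E m ω := by
  have hint (m : ℕ) : Integrable (E m) μ :=
    (integrable_map_measure (g := id) (by fun_prop) (hmeas m).aemeasurable).1
      (hdist m ▸ integrable_id_expMeasure hr)
  have hnorm (m : ℕ) : ∫ ω, ‖a m * E m ω‖ ∂μ = |a m| * ∫ x, ‖x‖ ∂expMeasure r := by
    rw [← hdist m, integral_map (hmeas m).aemeasurable (by fun_prop), ← integral_const_mul]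
    simp only [norm_mul, norm_eq_abs]
  refine ae_summable_of_summable_integral_norm (fun m => (hint m).const_mul _) ?_
  simpa only [hnorm] using ha.abs.mul_right _

theorem ProbabilityTheory.iIndepFun.tendsto_prod_integral_exp_neg_tsum_mul
    (hindep : iIndepFun E μ) (hmeas : ∀ m, Measurable (E m))
    (hdist : ∀ m, μ.map (E m) = expMeasure r) (hr : 0 < r) (ha_nonneg : ∀ m, 0 ≤ a m)
    (ha : Summable a) {s : ℝ} (hs : 0 ≤ s) :
    Tendsto (fun n => ∏ m ∈ range n, r / (r + s * a m)) atTop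
      (𝓝 (∫ ω, exp (-s * ∑' m, a m * E m ω) ∂μ)) := by
  have hnonneg (m : ℕ) : 0 ≤ᵐ[μ] fun ω => a m * E m ω := by
    have := ae_of_ae_map (hmeas m).aemeasurable ((hdist m).symm ▸ ae_nonneg_expMeasure r)
    filter_upwards [this] with ω hω using mul_nonneg (ha_nonneg m) hω
  have hmgf (m : ℕ) : mgf (fun ω => a m * E m ω) μ (-s) = r / (r + s * a m) := by
    rw [mgf_const_mul, ← mgf_id_map (hmeas m).aemeasurable, hdist,
      mgf_id_expMeasure hr.le ((mul_nonpos_of_nonneg_of_nonpos (ha_nonneg m)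
        (neg_nonpos.2 hs)).trans_lt hr)]
    ring_nf
  have h := (hindep.comp (fun m x => a m * x) fun m => measurable_const_mul _).tendsto_prod_mgf
    (fun m => ((hmeas m).const_mul _).aemeasurable) hnonneg
    (ae_summable_mul_of_map_eq_expMeasure hmeas hdist hr ha) (neg_nonpos.2 hs)
  simp only [Function.comp_def, hmgf] at h
  exact h

end ExponentialSeries

lemma summable_inv_sq_odd : Summable fun m : ℕ => ((2 * (m : ℝ) + 1) ^ 2)⁻¹ := by
  have h := (summable_nat_pow_inv.2 one_lt_two).comp_injective (i := fun m : ℕ => 2 * m + 1)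
    fun a b hab => by simpa using hab
  simpa [Function.comp_def] using h

theorem pg_tilting_normalization_general
    {Ω : Type*} [MeasurableSpace Ω] (μ : Measure Ω)
    (E : ℕ → Ω → ℝ) (hmeas : ∀ m, Measurable (E m))
    (hindep : iIndepFun E μ)
    (hdist : ∀ m, μ.map (E m) = expMeasure 1)
    (c : ℝ) :
    Real.cosh (c / 2) *
        ∫ ω, Real.exp (-(c ^ 2 * ((2 / π ^ 2) * ∑' m : ℕ, E m ω / (2 * (m : ℝ) + 1) ^ 2)) / 2) ∂μ
      = 1 := by
  have hlim := hindep.tendsto_prod_integral_exp_neg_tsum_mul hmeas hdist one_pos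
    (fun m => by positivity) summable_inv_sq_odd (s := c ^ 2 / π ^ 2) (by positivity)
  have hprod := (Real.tendsto_euler_cosh_prod (c / (2 * π))).inv₀ (cosh_pos _).ne'
  rw [show π * (c / (2 * π)) = c / 2 by field_simp] at hprod
  have hfactor (m : ℕ) : 1 / (1 + c ^ 2 / π ^ 2 * ((2 * (m : ℝ) + 1) ^ 2)⁻¹)
      = (1 + 4 * (c / (2 * π)) ^ 2 / (2 * m + 1) ^ 2)⁻¹ := by
    field_simp
    ring
  have hintegrand (ω : Ω) :
      exp (-(c ^ 2 * ((2 / π ^ 2) * ∑' m : ℕ, E m ω / (2 * (m : ℝ) + 1) ^ 2)) / 2)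
        = exp (-(c ^ 2 / π ^ 2) * ∑' m : ℕ, ((2 * (m : ℝ) + 1) ^ 2)⁻¹ * E m ω) := by
    simp only [← div_eq_inv_mul]
    ring_nf
  simp only [hintegrand]
  rw [tendsto_nhds_unique hlim (hprod.congr fun n => by simp only [hfactor, prod_inv_distrib]),
    mul_inv_cancel₀ (cosh_pos _).ne']

/-- Let `(E_m)` be i.i.d. exponential rate-1 random variables on a probability space and
`W = (2 / π²) ∑' m, E m / (2m + 1)²` (the PG(1,0) random variable). Then for every `c ∈ ℝ`,
`cosh (c / 2) * E[exp (-c² W / 2)] = 1`; equivalently, the exponentially tilted measure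
with density `w ↦ cosh (c / 2) * exp (-c² w / 2)` with respect to the law of `W`
(the PG(1,c) distribution) is a probability measure. -/
theorem pg_tilting_normalization
    {Ω : Type*} [MeasurableSpace Ω] (μ : Measure Ω) [IsProbabilityMeasure μ]
    (E : ℕ → Ω → ℝ) (hmeas : ∀ m, Measurable (E m))
    (hindep : iIndepFun E μ)
    (hdist : ∀ m, μ.map (E m) = expMeasure 1)
    (c : ℝ) :
    Real.cosh (c / 2) *
        ∫ ω, Real.exp (-(c ^ 2 * ((2 / π ^ 2) * ∑' m : ℕ, E m ω / (2 * (m : ℝ) + 1) ^ 2)) / 2) ∂μ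
      = 1 :=
  pg_tilting_normalization_general μ E hmeas hindep hdist c
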